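/- arXiv:2405.15378 — 4 statements merged into one kernel-verified Lean document; each statement's English description precedes it below -/
import Mathlib

section
/- Let n ≥ 1 and let A be an n×n real matrix all of whose entries are strictly positive. Then the spectral radius σ(A) of A equals the maximum, over all vectors x ∈ ℝⁿ with x ≥ 0 entrywise and x ≠ 0, of min_{1 ≤ i ≤ n, xᵢ ≠ 0} (Ax)ᵢ / xᵢ; in particular this supremum is attained (by a Perron eigenvector of A). -/
/-!
The Collatz–Wielandt value `cw x = min_{xᵢ ≠ 0} (A x)ᵢ / xᵢ` is the largest `r` with
`r • x ≤ A x`. For `A` with nonnegative entries it is invariant under scaling and does not decrease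
under `x ↦ A x`; for `A` positive it is continuous on the compact set `A '' Δ` (`Δ` the standard
simplex), all of whose vectors are positive, so it attains its maximum `r` over all nonnegative
nonzero `x` at some positive `y`. Maximality forces `A y = r • y`: otherwise `A y - r • y` is
nonnegative and nonzero, so `A (A y) - r • A y` is positive in every coordinate and
`cw (A y) > r`. Conversely, for a complex eigenpair `A v = μ • v` the triangle inequality gives
`‖μ‖ • |v| ≤ A |v|`, hence `‖μ‖ ≤ cw |v| ≤ r`. So `r` is a root of the characteristic polynomial
of largest modulus.
-/

open Matrix Polynomial

section StdSimplex

variable {𝕜 ι : Type*} [Field 𝕜] [LinearOrder 𝕜] [IsStrictOrderedRing 𝕜] [Fintype ι]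
  {x : ι → 𝕜}

theorem ne_zero_of_mem_stdSimplex (hx : x ∈ stdSimplex 𝕜 ι) : x ≠ 0 := by
  rintro rfl
  simpa using hx.2

theorem exists_pos_smul_mem_stdSimplex (hx0 : 0 ≤ x) (hx : x ≠ 0) :
    ∃ c : 𝕜, 0 < c ∧ c • x ∈ stdSimplex 𝕜 ι := by
  have hsum : 0 < ∑ i, x i := by
    obtain ⟨i, hi⟩ := Function.ne_iff.mp hx
    exact Finset.sum_pos' (fun i _ => hx0 i) ⟨i, Finset.mem_univ i, (hx0 i).lt_of_ne' hi⟩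
  refine ⟨(∑ i, x i)⁻¹, inv_pos.mpr hsum, fun i => mul_nonneg (inv_pos.mpr hsum).le (hx0 i), ?_⟩
  simp [← Finset.mul_sum, hsum.ne']

end StdSimplex

namespace Matrix

variable {ι : Type*} [Fintype ι]

theorem isRoot_charpoly_iff_exists_mulVec_eq_smul {K : Type*} [Field K] [DecidableEq ι]
    (M : Matrix ι ι K) (μ : K) : M.charpoly.IsRoot μ ↔ ∃ v ≠ 0, M *ᵥ v = μ • v := by
  rw [← charpoly_toLin', ← Module.End.hasEigenvalue_iff_isRoot_charpoly]
  constructor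
  · intro h
    obtain ⟨v, hv⟩ := h.exists_hasEigenvector
    exact ⟨v, hv.2, by simpa using hv.apply_eq_smul⟩
  · rintro ⟨v, hv, hMv⟩
    exact Module.End.hasEigenvalue_of_hasEigenvector
      (Module.End.hasEigenvector_iff.mpr ⟨by simpa using hMv, hv⟩)

variable {A : Matrix ι ι ℝ} {x : ι → ℝ}

theorem mulVec_nonneg (hA : ∀ i j, 0 ≤ A i j) (hx0 : 0 ≤ x) : 0 ≤ A *ᵥ x :=
  fun i => Finset.sum_nonneg fun j _ => mul_nonneg (hA i j) (hx0 j)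

theorem mulVec_mono (hA : ∀ i j, 0 ≤ A i j) {y : ι → ℝ} (hxy : x ≤ y) : A *ᵥ x ≤ A *ᵥ y :=
  sub_nonneg.mp (by simpa [mulVec_sub] using mulVec_nonneg hA (sub_nonneg.mpr hxy))

theorem mulVec_pos (hA : ∀ i j, 0 < A i j) (hx0 : 0 ≤ x) (hx : x ≠ 0) (i : ι) :
    0 < (A *ᵥ x) i := by
  obtain ⟨j, hj⟩ := Function.ne_iff.mp hx
  exact Finset.sum_pos' (fun j _ => mul_nonneg (hA i j).le (hx0 j))
    ⟨j, Finset.mem_univ j, mul_pos (hA i j) ((hx0 j).lt_of_ne' hj)⟩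

noncomputable def collatzWielandt (A : Matrix ι ι ℝ) (x : ι → ℝ) : ℝ :=
  sInf {y : ℝ | ∃ i, x i ≠ 0 ∧ y = A.mulVec x i / x i}

variable (A)

theorem finite_collatzWielandt_set (x : ι → ℝ) :
    {y : ℝ | ∃ i, x i ≠ 0 ∧ y = A.mulVec x i / x i}.Finite :=
  (Set.finite_range fun i => (A *ᵥ x) i / x i).subset fun _ ⟨i, _, hy⟩ => ⟨i, hy.symm⟩

theorem collatzWielandt_le {i : ι} (hi : x i ≠ 0) : collatzWielandt A x ≤ (A *ᵥ x) i / x i :=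
  csInf_le (finite_collatzWielandt_set A x).bddBelow ⟨i, hi, rfl⟩

theorem exists_collatzWielandt_eq (hx : x ≠ 0) :
    ∃ i, x i ≠ 0 ∧ collatzWielandt A x = (A *ᵥ x) i / x i := by
  obtain ⟨i, hi⟩ := Function.ne_iff.mp hx
  exact Set.Nonempty.csInf_mem (s := {y : ℝ | ∃ i, x i ≠ 0 ∧ y = A.mulVec x i / x i})
    ⟨_, i, hi, rfl⟩ (finite_collatzWielandt_set A x)

theorem collatzWielandt_eq_inf' [Nonempty ι] (hx : ∀ i, x i ≠ 0) :
    collatzWielandt A x = Finset.univ.inf' Finset.univ_nonempty fun i => (A *ᵥ x) i / x i := by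
  refine le_antisymm (Finset.le_inf' _ _ fun i _ => collatzWielandt_le A (hx i)) ?_
  obtain ⟨i, -, heq⟩ :=
    exists_collatzWielandt_eq A (x := x) fun h => hx (Classical.arbitrary ι) (by simp [h])
  exact heq ▸ Finset.inf'_le _ (Finset.mem_univ i)

theorem continuousOn_collatzWielandt {s : Set (ι → ℝ)} (hs : ∀ x ∈ s, ∀ i, x i ≠ 0) :
    ContinuousOn (collatzWielandt A) s := by
  cases isEmpty_or_nonempty ι
  · exact (continuous_of_const fun x y => congrArg _ (Subsingleton.elim x y)).continuousOn
  refine ContinuousOn.congr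
    (f := fun x => Finset.univ.inf' Finset.univ_nonempty fun i => (A *ᵥ x) i / x i) ?_
    fun x hx => collatzWielandt_eq_inf' A (hs x hx)
  refine ContinuousOn.finset_inf'_apply _ fun i _ => ContinuousOn.div ?_ ?_ fun x hx => hs x hx i
  · fun_prop
  · fun_prop

theorem le_collatzWielandt_of_smul_le (hx0 : 0 ≤ x) (hx : x ≠ 0) {r : ℝ} (h : r • x ≤ A *ᵥ x) :
    r ≤ collatzWielandt A x := by
  obtain ⟨i, hi, heq⟩ := exists_collatzWielandt_eq A hx
  exact heq ▸ (le_div_iff₀ ((hx0 i).lt_of_ne' hi)).mpr (h i)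

theorem lt_collatzWielandt_of_forall_lt (hx0 : 0 ≤ x) (hx : x ≠ 0) {r : ℝ}
    (h : ∀ i, r * x i < (A *ᵥ x) i) : r < collatzWielandt A x := by
  obtain ⟨i, hi, heq⟩ := exists_collatzWielandt_eq A hx
  exact heq ▸ (lt_div_iff₀ ((hx0 i).lt_of_ne' hi)).mpr (h i)

theorem collatzWielandt_smul_le (hA : ∀ i j, 0 ≤ A i j) (hx0 : 0 ≤ x) :
    collatzWielandt A x • x ≤ A *ᵥ x := by
  intro i
  rcases (hx0 i).eq_or_lt with h | h
  · simpa [← h] using mulVec_nonneg hA hx0 i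
  · exact (le_div_iff₀ h).mp (collatzWielandt_le A h.ne')

theorem collatzWielandt_smul {c : ℝ} (hc : c ≠ 0) :
    collatzWielandt A (c • x) = collatzWielandt A x := by
  simp only [collatzWielandt, mulVec_smul, Pi.smul_apply, smul_eq_mul, mul_div_mul_left _ _ hc,
    ne_eq, mul_eq_zero, hc, false_or]

theorem collatzWielandt_le_collatzWielandt_mulVec (hA : ∀ i j, 0 ≤ A i j) (hx0 : 0 ≤ x)
    (hAx : A *ᵥ x ≠ 0) : collatzWielandt A x ≤ collatzWielandt A (A *ᵥ x) :=
  le_collatzWielandt_of_smul_le A (mulVec_nonneg hA hx0) hAx <| by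
    simpa [mulVec_smul] using mulVec_mono hA (collatzWielandt_smul_le A hA hx0)

theorem exists_pos_isMax_collatzWielandt [Nonempty ι] (hA : ∀ i j, 0 < A i j) :
    ∃ y, (∀ i, 0 < y i) ∧
      ∀ x, 0 ≤ x → x ≠ 0 → collatzWielandt A x ≤ collatzWielandt A y := by
  classical
  set K := (A *ᵥ ·) '' stdSimplex ℝ ι
  have hK : ∀ y ∈ K, ∀ i, 0 < y i := by
    rintro _ ⟨u, hu, rfl⟩ i
    exact mulVec_pos hA hu.1 (ne_zero_of_mem_stdSimplex hu) i
  have hK_compact : IsCompact K :=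
    (isCompact_stdSimplex ℝ ι).image (by fun_prop)
  obtain ⟨y, hyK, hmax⟩ := hK_compact.exists_isMaxOn
    ⟨_, _, single_mem_stdSimplex ℝ (Classical.arbitrary ι), rfl⟩
    (continuousOn_collatzWielandt A fun y hy i => (hK y hy i).ne')
  refine ⟨y, hK y hyK, fun x hx0 hx => ?_⟩
  obtain ⟨c, hc, hcx⟩ := exists_pos_smul_mem_stdSimplex hx0 hx
  calc collatzWielandt A x = collatzWielandt A (c • x) := (collatzWielandt_smul A hc.ne').symm
    _ ≤ collatzWielandt A (A *ᵥ (c • x)) :=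
      collatzWielandt_le_collatzWielandt_mulVec A (fun i j => (hA i j).le) hcx.1
        fun h => (hK _ ⟨_, hcx, rfl⟩ (Classical.arbitrary ι)).ne' (congrFun h _)
    _ ≤ collatzWielandt A y := hmax ⟨_, hcx, rfl⟩

theorem mulVec_eq_collatzWielandt_smul_of_isMax (hA : ∀ i j, 0 < A i j) {y : ι → ℝ}
    (hy0 : 0 ≤ y) (hy : y ≠ 0)
    (hmax : ∀ x, 0 ≤ x → x ≠ 0 → collatzWielandt A x ≤ collatzWielandt A y) :
    A *ᵥ y = collatzWielandt A y • y := by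
  by_contra hne
  set r := collatzWielandt A y
  have hA0 : ∀ i j, 0 ≤ A i j := fun i j => (hA i j).le
  have hw0 : 0 ≤ A *ᵥ y - r • y := sub_nonneg.mpr (collatzWielandt_smul_le A hA0 hy0)
  have hw : A *ᵥ y - r • y ≠ 0 := sub_ne_zero.mpr hne
  have hz0 : 0 ≤ A *ᵥ y := mulVec_nonneg hA0 hy0
  obtain ⟨i₀, -⟩ := Function.ne_iff.mp hy
  have hz : A *ᵥ y ≠ 0 := fun h => (mulVec_pos hA hy0 hy i₀).ne' (congrFun h i₀)
  have hlt : r < collatzWielandt A (A *ᵥ y) := lt_collatzWielandt_of_forall_lt A hz0 hz fun i => by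
    simpa [mulVec_sub, mulVec_smul] using mulVec_pos hA hw0 hw i
  exact hlt.not_ge (hmax _ hz0 hz)

theorem norm_le_collatzWielandt_of_mulVec_eq_smul (hA : ∀ i j, 0 ≤ A i j) {μ : ℂ} {v : ι → ℂ}
    (hv : v ≠ 0) (hμ : A.map Complex.ofReal *ᵥ v = μ • v) :
    ‖μ‖ ≤ collatzWielandt A (‖v ·‖) := by
  refine le_collatzWielandt_of_smul_le A (fun i => norm_nonneg _)
    (fun h => hv (funext fun i => norm_eq_zero.mp (congrFun h i))) fun i => ?_
  calc ‖μ‖ * ‖v i‖ = ‖(A.map Complex.ofReal *ᵥ v) i‖ := by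
        rw [hμ, Pi.smul_apply, smul_eq_mul, norm_mul]
    _ ≤ ∑ j, ‖(A i j : ℂ) * v j‖ := norm_sum_le _ _
    _ = (A *ᵥ (‖v ·‖)) i := by simp [mulVec, dotProduct, abs_of_nonneg (hA i _)]

theorem isGreatest_norm_roots_charpoly [DecidableEq ι] (hA : ∀ i j, 0 ≤ A i j) {r : ℝ}
    {y : ι → ℝ} (hy : y ≠ 0) (hyr : A *ᵥ y = r • y)
    (hmax : ∀ x, 0 ≤ x → x ≠ 0 → collatzWielandt A x ≤ r) :
    IsGreatest {s : ℝ | ∃ μ : ℂ, μ ∈ (A.map Complex.ofReal).charpoly.roots ∧ s = ‖μ‖} r := by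
  have hbound : ∀ μ ∈ (A.map Complex.ofReal).charpoly.roots, ‖μ‖ ≤ r := fun μ hμ => by
    obtain ⟨v, hv, hvμ⟩ := (isRoot_charpoly_iff_exists_mulVec_eq_smul _ μ).mp (mem_roots'.mp hμ).2
    exact (norm_le_collatzWielandt_of_mulVec_eq_smul A hA hv hvμ).trans
      (hmax _ (fun i => norm_nonneg _) fun h => hv (funext fun i => norm_eq_zero.mp (congrFun h i)))
  have hr : (r : ℂ) ∈ (A.map Complex.ofReal).charpoly.roots := by
    rw [mem_roots (charpoly_monic _).ne_zero]
    change (A.map Complex.ofRealHom).charpoly.IsRoot _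
    rw [charpoly_map]
    exact ((isRoot_charpoly_iff_exists_mulVec_eq_smul A r).mpr ⟨y, hy, hyr⟩).map
  have hr_nonneg : 0 ≤ r := by simpa using (norm_nonneg _).trans (hbound _ hr)
  exact ⟨⟨r, hr, by simp [abs_of_nonneg hr_nonneg]⟩, fun _ ⟨μ, hμ, hs⟩ => hs ▸ hbound μ hμ⟩

end Matrix

open Matrix

/-- For an `n × n` real matrix `A` with strictly positive entries, the spectral radius of `A`
(the maximum modulus of the complex roots of the characteristic polynomial) is the maximum,
over nonnegative nonzero vectors `x`, of `min_{i, x i ≠ 0} (A x)_i / x_i`; in particular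
the maximum is attained. (Collatz–Wielandt formula.) -/
theorem stmt0 (n : ℕ) (hn : 1 ≤ n) (A : Matrix (Fin n) (Fin n) ℝ)
    (hA : ∀ i j, 0 < A i j) :
    IsGreatest
      {r : ℝ | ∃ x : Fin n → ℝ, (∀ i, 0 ≤ x i) ∧ x ≠ 0 ∧
        r = sInf {y : ℝ | ∃ i : Fin n, x i ≠ 0 ∧ y = A.mulVec x i / x i}}
      (sSup {r : ℝ | ∃ μ : ℂ, μ ∈ (A.map Complex.ofReal).charpoly.roots ∧
        r = ‖μ‖}) := by
  have : Nonempty (Fin n) := ⟨⟨0, hn⟩⟩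
  obtain ⟨y, hy_pos, hy_max⟩ := exists_pos_isMax_collatzWielandt A hA
  have hy0 : 0 ≤ y := fun i => (hy_pos i).le
  have hy : y ≠ 0 := fun h => (hy_pos ⟨0, hn⟩).ne' (congrFun h _)
  have hspec := isGreatest_norm_roots_charpoly A (fun i j => (hA i j).le) hy
    (mulVec_eq_collatzWielandt_smul_of_isMax A hA hy0 hy hy_max) hy_max
  rw [hspec.csSup_eq]
  exact ⟨⟨y, hy0, hy, rfl⟩, fun _ ⟨x, hx0, hx, hr⟩ => hr ▸ hy_max x hx0 hx⟩
end

section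
/- Let n ≥ 3 and let x₁, …, x_{n−2} be nonzero complex numbers. Then the matrix product f₁ · h_{n−2}(x₁) · f₂ · h_{n−3}(x₂) · ⋯ · f_{n−2} · h₁(x_{n−2}) · f_{n−1} equals the n×n matrix L with entries: L_{1,1} = 1; L_{2,1} = −1 and L_{2,2} = 1; for 3 ≤ i ≤ n, L_{i,i−1} = −(x₁x₂⋯x_{i−2})^{−1} and L_{i,i} = (x₁x₂⋯x_{i−2})^{−1}; and all other entries equal to 0. -/
open Matrix

/-- `fM n k` is the `n × n` complex matrix equal to the identity except that its
(1-indexed) `(k+1, k)` entry is `-1`. The Lean entry at `(i, j)` (0-indexed) corresponds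
to the 1-indexed entry `(i+1, j+1)`. -/
def fM (n k : ℕ) : Matrix (Fin n) (Fin n) ℂ :=
  Matrix.of fun i j =>
    if (i : ℕ) = (j : ℕ) then 1
    else if (i : ℕ) + 1 = k + 1 ∧ (j : ℕ) + 1 = k then -1 else 0

/-- `hM n i x` is the `n × n` diagonal matrix whose last `i` diagonal entries equal `x⁻¹`
and whose remaining diagonal entries equal `1`. -/
noncomputable def hM (n i : ℕ) (x : ℂ) : Matrix (Fin n) (Fin n) ℂ :=
  Matrix.diagonal fun p => if n - i + 1 ≤ (p : ℕ) + 1 then x⁻¹ else 1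

/-- Partial product of the first `k` factors. -/
noncomputable def Mk (n k : ℕ) (x : ℕ → ℂ) : Matrix (Fin n) (Fin n) ℂ :=
  Matrix.of fun i j =>
    if (i : ℕ) = (j : ℕ) then (∏ m ∈ Finset.Icc 1 (min ((i:ℕ)-1) k), x m)⁻¹
    else if (i : ℕ) = (j : ℕ) + 1 ∧ (i : ℕ) ≤ k then
      -(∏ m ∈ Finset.Icc 1 ((i:ℕ)-1), x m)⁻¹
    else 0

lemma mul_fM {n : ℕ} (A : Matrix (Fin n) (Fin n) ℂ) (c : ℕ) (hc : c < n) (i j : Fin n) :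
    (A * fM n c) i j = A i j - (if (j:ℕ)+1 = c then A i ⟨c, hc⟩ else 0) := by
  rw [Matrix.mul_apply]
  have key : ∀ p : Fin n, A i p * fM n c p j =
      (if p = j then A i j else 0) +
      (if p = ⟨c, hc⟩ then (if (j:ℕ)+1 = c then -A i ⟨c,hc⟩ else 0) else 0) := by
    intro p
    simp only [fM, Matrix.of_apply, Fin.ext_iff]
    split_ifs <;> simp_all <;> first | omega | exact congrArg (A i) (Fin.ext (by omega)) | exact congrArg (A i) (Fin.ext (by simp only [Fin.val_mk]; omega))
  rw [Finset.sum_congr rfl (fun p _ => key p), Finset.sum_add_distrib,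
    Finset.sum_ite_eq' Finset.univ j, Finset.sum_ite_eq' Finset.univ (⟨c,hc⟩ : Fin n)]
  simp only [Finset.mem_univ, if_true]
  split_ifs <;> ring1

lemma step (n k : ℕ) (hn : 3 ≤ n) (hk : k + 1 ≤ n - 2) (x : ℕ → ℂ) :
    Mk n k x * (fM n (k+1) * hM n (n-1-(k+1)) (x (k+1))) = Mk n (k+1) x := by
  have hprod : (∏ m ∈ Finset.Icc 1 (k+1), x m) = (∏ m ∈ Finset.Icc 1 k, x m) * x (k+1) :=
    Finset.prod_Icc_succ_top (Nat.succ_le_succ (Nat.zero_le k)) x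
  ext i j
  rw [← Matrix.mul_assoc, hM, Matrix.mul_diagonal,
    mul_fM (Mk n k x) (k+1) (by omega)]
  simp only [Mk, Matrix.of_apply, Fin.val_mk]
  have hi := i.isLt
  have hj := j.isLt
  split_ifs <;> first
    | omega
    | (exfalso; omega)
    | ring1
    | (rw [show ((i:ℕ)-1) ⊓ (k+1) = ((i:ℕ)-1) ⊓ k from by omega]
       first
         | ring1
         | (rw [show ((i:ℕ)-1) ⊓ k = (i:ℕ)-1 from by omega]; ring1))
    | (rw [show ((i:ℕ)-1) ⊓ k = (i:ℕ)-1 from by omega]; ring1)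
    | (rw [show ((i:ℕ)-1) ⊓ k = k from by omega,
           show ((i:ℕ)-1) ⊓ (k+1) = k+1 from by omega, hprod, mul_inv]; ring1)

lemma Mk_zero (n : ℕ) (x : ℕ → ℂ) : Mk n 0 x = 1 := by
  ext i j
  simp only [Mk, Matrix.of_apply, Nat.min_zero, Finset.Icc_self,
    Matrix.one_apply, Nat.le_zero]
  split_ifs <;> simp_all [Fin.ext_iff] <;> omega

lemma prod_eq (n : ℕ) (hn : 3 ≤ n) (x : ℕ → ℂ) :
    ∀ k, k ≤ n - 2 →
      (List.ofFn (fun j : Fin k =>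
        fM n ((j : ℕ) + 1) * hM n (n - 1 - ((j : ℕ) + 1)) (x ((j : ℕ) + 1)))).prod
        = Mk n k x
  | 0, _ => by simp [Mk_zero]
  | (k+1), hk => by
    rw [List.ofFn_succ', List.concat_eq_append, List.prod_append, List.prod_cons,
      List.prod_nil, mul_one]
    simp only [Fin.coe_castSucc, Fin.val_last]
    rw [prod_eq n hn x k (by omega), step n k hn hk x]


/-- For `n ≥ 3` and nonzero complex numbers `x₁, …, x_{n-2}`, the product
`f₁ · h_{n-2}(x₁) · f₂ · h_{n-3}(x₂) ⋯ f_{n-2} · h₁(x_{n-2}) · f_{n-1}` is the lower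
bidiagonal matrix `L` with `L_{1,1} = 1`, `L_{2,1} = -1`, `L_{2,2} = 1`, and for `3 ≤ i ≤ n`,
`L_{i,i-1} = -(x₁ ⋯ x_{i-2})⁻¹`, `L_{i,i} = (x₁ ⋯ x_{i-2})⁻¹` (1-indexed). -/
theorem stmt4 (n : ℕ) (hn : 3 ≤ n) (x : ℕ → ℂ)
    (hx : ∀ m, 1 ≤ m → m ≤ n - 2 → x m ≠ 0) :
    (List.ofFn (fun j : Fin (n - 2) =>
        fM n ((j : ℕ) + 1) * hM n (n - 1 - ((j : ℕ) + 1)) (x ((j : ℕ) + 1)))).prod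
      * fM n (n - 1)
    = Matrix.of (fun i j : Fin n =>
        if (i : ℕ) = (j : ℕ) then (∏ m ∈ Finset.Icc 1 ((i : ℕ) + 1 - 2), x m)⁻¹
        else if (i : ℕ) = (j : ℕ) + 1 then -(∏ m ∈ Finset.Icc 1 ((i : ℕ) + 1 - 2), x m)⁻¹
        else 0) := by
  rw [prod_eq n hn x (n-2) le_rfl]
  ext i j
  rw [mul_fM (Mk n (n-2) x) (n-1) (by omega)]
  simp only [Mk, Matrix.of_apply, Fin.val_mk]
  have hi := i.isLt
  have hj := j.isLt
  split_ifs <;> first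
    | omega
    | (exfalso; omega)
    | ring1
    | (rw [show ((i:ℕ)-1) ⊓ (n-2) = (i:ℕ)+1-2 from by omega]; ring1)
    | (rw [show (i:ℕ)-1 = (i:ℕ)+1-2 from by omega]; ring1)
end

section
/- Let n ≥ 3 and let x₁, …, x_{n−2} be nonzero complex numbers. Let L = f₁ · h_{n−2}(x₁) · f₂ · h_{n−3}(x₂) · ⋯ · f_{n−2} · h₁(x_{n−2}) · f_{n−1} and let S be the n×n matrix with S_{ij} = (−1)^{i+1} if i + j = n + 1 and 0 otherwise. Then S · L · S = (−1)^{n+1} · U, where U is the n×n matrix with entries: U_{i,i} = U_{i,i+1} = (x₁x₂⋯x_{n−1−i})^{−1} for 1 ≤ i ≤ n−1 (with the empty product interpreted as 1 when i = n−1, so U_{n−1,n−1} = U_{n−1,n} = 1), U_{n,n} = 1, and all other entries 0. -/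
open Matrix

/-- auxiliary: partial product formula -/
lemma partialProd (n : ℕ) (hn : 3 ≤ n) (x : ℕ → ℂ) :
    ∀ t, t ≤ n - 2 →
    (List.ofFn (fun j : Fin t =>
        fM n ((j : ℕ) + 1) * hM n (n - 1 - ((j : ℕ) + 1)) (x ((j : ℕ) + 1)))).prod
    = Matrix.of (fun i j : Fin n =>
        if (i : ℕ) = (j : ℕ) then (∏ m ∈ Finset.Icc 1 (min ((i : ℕ) - 1) t), x m)⁻¹
        else if (i : ℕ) = (j : ℕ) + 1 ∧ (i : ℕ) ≤ t
          then -(∏ m ∈ Finset.Icc 1 ((i : ℕ) - 1), x m)⁻¹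
        else 0) := by
  intro t
  induction t with
  | zero =>
    intro _
    ext i j
    simp only [List.ofFn_zero, List.prod_nil, Matrix.one_apply, Matrix.of_apply]
    by_cases h : (i : ℕ) = (j : ℕ)
    · simp [h, Fin.ext_iff, Nat.min_zero]
    · have : i ≠ j := fun e => h (by rw [e])
      simp only [if_neg this, if_neg h]
      rw [if_neg]; omega
  | succ t ih =>
    intro ht
    have ht' : t ≤ n - 2 := by omega
    rw [List.ofFn_succ', List.concat_eq_append, List.prod_append, List.prod_cons,
      List.prod_nil, mul_one]
    have e1 : (List.ofFn fun i : Fin t =>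
        (fun j : Fin (t+1) => fM n ((j : ℕ) + 1) * hM n (n - 1 - ((j : ℕ) + 1)) (x ((j : ℕ) + 1))) i.castSucc)
        = List.ofFn (fun j : Fin t =>
        fM n ((j : ℕ) + 1) * hM n (n - 1 - ((j : ℕ) + 1)) (x ((j : ℕ) + 1))) := by
      congr 1
    rw [e1, ih ht']
    have htn : t + 1 < n := by omega
    set ct : Fin n := ⟨t + 1, htn⟩ with hct
    ext i j
    simp only [Fin.val_last]
    rw [← Matrix.mul_assoc, hM, Matrix.mul_diagonal, Matrix.mul_apply]
    have hfm : ∀ c : Fin n, fM n (t+1) c j =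
        (if c = j then 1 else 0) + (if c = ct then (if (j:ℕ) = t then (-1:ℂ) else 0) else 0) := by
      intro c
      simp only [fM, Matrix.of_apply, hct, Fin.ext_iff]
      split_ifs <;> first | omega | norm_num
    rw [Finset.sum_congr rfl (fun c _ => by rw [hfm c, mul_add])]
    rw [Finset.sum_add_distrib]
    simp only [mul_ite, mul_one, mul_zero, Finset.sum_ite_eq', Finset.mem_univ, if_pos]
    have harith : n - (n - 1 - (t + 1)) + 1 = t + 3 := by omega
    rw [harith]
    simp only [Matrix.of_apply]
    have hi : (i:ℕ) < n := i.isLt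
    have hj : (j:ℕ) < n := j.isLt
    have hctv : (ct:ℕ) = t + 1 := rfl
    have hmul : ∀ k : ℕ, (∏ m ∈ Finset.Icc 1 k, x m)⁻¹ * (x (k+1))⁻¹
        = (∏ m ∈ Finset.Icc 1 (k+1), x m)⁻¹ := by
      intro k
      rw [Finset.prod_Icc_succ_top (by omega : 1 ≤ k + 1), mul_inv]
    split_ifs <;> try omega
    all_goals first
      | ring1
      | (rw [add_zero, show ((i:ℕ) - 1) ⊓ t = t from by omega,
            show ((i:ℕ) - 1) ⊓ (t + 1) = t + 1 from by omega]; exact hmul t)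
      | (rw [show ((i:ℕ) - 1) ⊓ t = ((i:ℕ) - 1) ⊓ (t + 1) from by omega]; ring1)
      | (rw [show ((i:ℕ) - 1) ⊓ t = (i:ℕ) - 1 from by omega]; ring1)

lemma Lentries (n : ℕ) (hn : 3 ≤ n) (x : ℕ → ℂ)
    (L : Matrix (Fin n) (Fin n) ℂ)
    (hL : L = (List.ofFn (fun j : Fin (n - 2) =>
        fM n ((j : ℕ) + 1) * hM n (n - 1 - ((j : ℕ) + 1)) (x ((j : ℕ) + 1)))).prod
      * fM n (n - 1)) :
    ∀ i j : Fin n, L i j =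
      if (i : ℕ) = (j : ℕ) then (∏ m ∈ Finset.Icc 1 ((i : ℕ) - 1), x m)⁻¹
      else if (i : ℕ) = (j : ℕ) + 1 then -(∏ m ∈ Finset.Icc 1 ((i : ℕ) - 1), x m)⁻¹
      else 0 := by
  rw [partialProd n hn x (n - 2) le_rfl] at hL
  have h1n : n - 1 < n := by omega
  set cl : Fin n := ⟨n - 1, h1n⟩ with hcl
  intro i j
  rw [hL, Matrix.mul_apply]
  have hfm : ∀ c : Fin n, fM n (n - 1) c j =
      (if c = j then 1 else 0)
        + (if c = cl then (if (j : ℕ) = n - 2 then (-1 : ℂ) else 0) else 0) := by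
    intro c
    simp only [fM, Matrix.of_apply, hcl, Fin.ext_iff]
    split_ifs <;> first | omega | norm_num
  rw [Finset.sum_congr rfl (fun c _ => by rw [hfm c, mul_add])]
  rw [Finset.sum_add_distrib]
  simp only [mul_ite, mul_one, mul_zero, Finset.sum_ite_eq', Finset.mem_univ, if_pos,
    Matrix.of_apply]
  have hi := i.isLt
  have hj := j.isLt
  have hclv : (cl : ℕ) = n - 1 := rfl
  rw [show ((i : ℕ) - 1) ⊓ (n - 2) = (i : ℕ) - 1 from by omega]
  split_ifs <;> first | omega | ring1
theorem stmt5aux (n : ℕ) (hn : 3 ≤ n) (x : ℕ → ℂ)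
    (S L : Matrix (Fin n) (Fin n) ℂ)
    (hS : ∀ i j : Fin n, S i j =
      if ((i : ℕ) + 1) + ((j : ℕ) + 1) = n + 1 then (-1 : ℂ) ^ (((i : ℕ) + 1) + 1) else 0)
    (hLij : ∀ i j : Fin n, L i j =
      if (i : ℕ) = (j : ℕ) then (∏ m ∈ Finset.Icc 1 ((i : ℕ) - 1), x m)⁻¹
      else if (i : ℕ) = (j : ℕ) + 1 then -(∏ m ∈ Finset.Icc 1 ((i : ℕ) - 1), x m)⁻¹
      else 0) :
    S * L * S = ((-1 : ℂ) ^ (n + 1)) •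
      Matrix.of (fun i j : Fin n =>
        if (j : ℕ) = (i : ℕ) ∨ (j : ℕ) = (i : ℕ) + 1
        then (∏ m ∈ Finset.Icc 1 (n - 1 - ((i : ℕ) + 1)), x m)⁻¹ else 0) := by
  ext i j
  have hi := i.isLt
  have hj := j.isLt
  have ha : n - 1 - (i : ℕ) < n := by omega
  have hb : n - 1 - (j : ℕ) < n := by omega
  set a : Fin n := ⟨n - 1 - (i : ℕ), ha⟩ with hA
  set b : Fin n := ⟨n - 1 - (j : ℕ), hb⟩ with hB
  have hav : (a : ℕ) = n - 1 - (i : ℕ) := rfl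
  have hbv : (b : ℕ) = n - 1 - (j : ℕ) := rfl
  have hS1 : ∀ c : Fin n, S i c = (if c = a then (-1 : ℂ) ^ ((i : ℕ) + 2) else 0) := by
    intro c
    rw [hS i c]
    by_cases hc : c = a
    · have hv : (c : ℕ) = n - 1 - (i : ℕ) := by rw [hc]
      rw [if_pos hc, if_pos (by omega)]
    · have hv : (c : ℕ) ≠ n - 1 - (i : ℕ) := by
        intro h; exact hc (Fin.ext (by rw [h, hav]))
      rw [if_neg hc, if_neg (by omega)]
  have hS2 : ∀ c : Fin n, S c j = (if c = b then (-1 : ℂ) ^ ((n - 1 - (j : ℕ)) + 2) else 0) := by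
    intro c
    rw [hS c j]
    by_cases hc : c = b
    · have hv : (c : ℕ) = n - 1 - (j : ℕ) := by rw [hc]
      rw [if_pos hc, if_pos (by omega), hv]
    · have hv : (c : ℕ) ≠ n - 1 - (j : ℕ) := by
        intro h; exact hc (Fin.ext (by rw [h, hbv]))
      rw [if_neg hc, if_neg (by omega)]
  rw [Matrix.mul_apply]
  have hSL : ∀ c : Fin n, (S * L) i c = (-1 : ℂ) ^ ((i : ℕ) + 2) * L a c := by
    intro c
    rw [Matrix.mul_apply]
    simp only [hS1, ite_mul, zero_mul, Finset.sum_ite_eq', Finset.mem_univ, if_pos]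
  simp only [hSL, hS2, mul_ite, mul_zero, Finset.sum_ite_eq', Finset.mem_univ, if_pos]
  rw [hLij a b]
  simp only [Matrix.smul_apply, Matrix.of_apply, smul_eq_mul]
  by_cases hji : (j : ℕ) = (i : ℕ)
  · rw [if_pos (Or.inl hji), if_pos (show (a : ℕ) = (b : ℕ) from by omega),
      show n - 1 - ((i : ℕ) + 1) = (a : ℕ) - 1 from by omega]
    have hs : (-1 : ℂ) ^ ((i : ℕ) + 2) * (-1 : ℂ) ^ ((n - 1 - (j : ℕ)) + 2)
        = (-1 : ℂ) ^ (n + 1) := by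
      rw [← pow_add, show (i : ℕ) + 2 + ((n - 1 - (j : ℕ)) + 2) = (n + 1) + 2 from by omega,
        pow_add]
      norm_num
    linear_combination (∏ m ∈ Finset.Icc 1 ((a : ℕ) - 1), x m)⁻¹ * hs
  · by_cases hji2 : (j : ℕ) = (i : ℕ) + 1
    · rw [if_pos (Or.inr hji2), if_neg (show ¬(a : ℕ) = (b : ℕ) from by omega),
        if_pos (show (a : ℕ) = (b : ℕ) + 1 from by omega),
        show n - 1 - ((i : ℕ) + 1) = (a : ℕ) - 1 from by omega]
      have hs : (-1 : ℂ) ^ ((i : ℕ) + 2) * (-1 : ℂ) ^ ((n - 1 - (j : ℕ)) + 2)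
          = -(-1 : ℂ) ^ (n + 1) := by
        rw [← pow_add, show (i : ℕ) + 2 + ((n - 1 - (j : ℕ)) + 2) = (n + 1) + 1 from by omega,
          pow_succ]
        ring
      linear_combination (-(∏ m ∈ Finset.Icc 1 ((a : ℕ) - 1), x m)⁻¹) * hs
    · rw [if_neg (show ¬((j : ℕ) = (i : ℕ) ∨ (j : ℕ) = (i : ℕ) + 1) from by omega),
        if_neg (show ¬(a : ℕ) = (b : ℕ) from by omega),
        if_neg (show ¬(a : ℕ) = (b : ℕ) + 1 from by omega)]
      ring1

/-- Let `L = f₁ · h_{n-2}(x₁) · f₂ · h_{n-3}(x₂) ⋯ f_{n-2} · h₁(x_{n-2}) · f_{n-1}` and let `S`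
be the anti-diagonal sign matrix. Then `S · L · S = (-1)^{n+1} · U`, where (1-indexed)
`U_{i,i} = U_{i,i+1} = (x₁ ⋯ x_{n-1-i})⁻¹` for `1 ≤ i ≤ n-1`, `U_{n,n} = 1`, and all other
entries vanish. -/
theorem stmt5 (n : ℕ) (hn : 3 ≤ n) (x : ℕ → ℂ)
    (hx : ∀ m, 1 ≤ m → m ≤ n - 2 → x m ≠ 0)
    (S : Matrix (Fin n) (Fin n) ℂ)
    (hS : ∀ i j : Fin n, S i j =
      if ((i : ℕ) + 1) + ((j : ℕ) + 1) = n + 1 then (-1 : ℂ) ^ (((i : ℕ) + 1) + 1) else 0)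
    (L : Matrix (Fin n) (Fin n) ℂ)
    (hL : L = (List.ofFn (fun j : Fin (n - 2) =>
        fM n ((j : ℕ) + 1) * hM n (n - 1 - ((j : ℕ) + 1)) (x ((j : ℕ) + 1)))).prod
      * fM n (n - 1)) :
    S * L * S = ((-1 : ℂ) ^ (n + 1)) •
      Matrix.of (fun i j : Fin n =>
        if (j : ℕ) = (i : ℕ) ∨ (j : ℕ) = (i : ℕ) + 1
        then (∏ m ∈ Finset.Icc 1 (n - 1 - ((i : ℕ) + 1)), x m)⁻¹ else 0) := by
  exact stmt5aux n hn x S L hS (Lentries n hn x L hL)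
end

section
/- Let n ≥ 2, let 1 ≤ k ≤ n, and let x₁, …, x_{n−k−1} be nonzero complex numbers (no parameters when k ≥ n−1). Let Step(k) be the n×n block-diagonal matrix diag(I_{k−1}, L), where I_{k−1} is the (k−1)×(k−1) identity matrix and L is the (n−k+1)×(n−k+1) matrix with L_{1,1} = 1; L_{2,1} = −1 and L_{2,2} = 1; and for 3 ≤ i ≤ n−k+1, L_{i,i−1} = −(x₁⋯x_{i−2})^{−1} and L_{i,i} = (x₁⋯x_{i−2})^{−1}, all other entries 0. Let S be the n×n matrix with S_{ij} = (−1)^{i+1} if i + j = n + 1 and 0 otherwise. Then S · Step(k) · S = (−1)^{n+1} · M, where M is the n×n matrix with entries: M_{i,i} = M_{i,i+1} = (x₁x₂⋯x_{n−k−i})^{−1} for 1 ≤ i ≤ n−k (the empty product interpreted as 1 when i = n−k), M_{j,j} = 1 for n−k+1 ≤ j ≤ n, and all other entries 0. -/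
open Matrix

lemma negpow13 (a b : ℕ) (h : a % 2 = b % 2) : (-1:ℂ)^a = (-1)^b := by
  rw [neg_one_pow_eq_pow_mod_two (R := ℂ) a, h, ← neg_one_pow_eq_pow_mod_two]

/-- Let `Step(k)` be the block diagonal matrix `diag(I_{k-1}, L)` where (1-indexed)
`L_{1,1} = 1`, `L_{2,1} = -1`, `L_{2,2} = 1`, and for `3 ≤ r`, `L_{r,r-1} = -(x₁⋯x_{r-2})⁻¹`
and `L_{r,r} = (x₁⋯x_{r-2})⁻¹`, and let `S` be the anti-diagonal sign matrix. Then
`S · Step(k) · S = (-1)^{n+1} · M` where (1-indexed) `M_{i,i} = M_{i,i+1} = (x₁⋯x_{n-k-i})⁻¹`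
for `1 ≤ i ≤ n-k` (empty products equal to `1`), `M_{j,j} = 1` for `n-k+1 ≤ j ≤ n`, and all
other entries vanish. -/
theorem stmt13 (n : ℕ) (hn : 2 ≤ n) (k : ℕ) (hk1 : 1 ≤ k) (hk2 : k ≤ n)
    (x : ℕ → ℂ) (hx : ∀ m, 1 ≤ m → m ≤ n - k - 1 → x m ≠ 0)
    (S : Matrix (Fin n) (Fin n) ℂ)
    (hS : ∀ i j : Fin n, S i j =
      if ((i : ℕ) + 1) + ((j : ℕ) + 1) = n + 1 then (-1 : ℂ) ^ (((i : ℕ) + 1) + 1) else 0)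
    (Step : Matrix (Fin n) (Fin n) ℂ)
    (hStep : ∀ i j : Fin n, Step i j =
      if (i : ℕ) + 1 ≤ k - 1 then (if (j : ℕ) = (i : ℕ) then 1 else 0)
      else if (j : ℕ) = (i : ℕ) then
        (∏ m ∈ Finset.Icc 1 ((i : ℕ) + 1 - k - 1), x m)⁻¹
      else if (j : ℕ) + 1 = (i : ℕ) ∧ k + 1 ≤ (i : ℕ) + 1 then
        -(∏ m ∈ Finset.Icc 1 ((i : ℕ) + 1 - k - 1), x m)⁻¹
      else 0) :
    S * Step * S = ((-1 : ℂ) ^ (n + 1)) •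
      Matrix.of (fun i j : Fin n =>
        if (j : ℕ) = (i : ℕ) then
          (∏ m ∈ Finset.Icc 1 (n - k - ((i : ℕ) + 1)), x m)⁻¹
        else if (j : ℕ) = (i : ℕ) + 1 ∧ (i : ℕ) + 1 ≤ n - k then
          (∏ m ∈ Finset.Icc 1 (n - k - ((i : ℕ) + 1)), x m)⁻¹
        else 0) := by
  ext i j
  have hi := i.isLt
  have hj := j.isLt
  have h1 : ∀ b : Fin n, (S * Step) i b
      = (-1:ℂ)^((i:ℕ)+2) * Step ⟨n-1-(i:ℕ), by omega⟩ b := by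
    intro b
    rw [Matrix.mul_apply]
    rw [Finset.sum_eq_single (⟨n-1-(i:ℕ), by omega⟩ : Fin n)]
    · rw [hS]
      rw [if_pos (by simp; omega)]
    · intro a _ ha
      rw [hS, if_neg, zero_mul]
      intro h
      exact ha (Fin.ext (show (a:ℕ) = n-1-(i:ℕ) by omega))
    · simp
  have key : (S * Step * S) i j
      = (-1:ℂ)^((i:ℕ)+2) * Step ⟨n-1-(i:ℕ), by omega⟩ ⟨n-1-(j:ℕ), by omega⟩
        * (-1:ℂ)^((n-1-(j:ℕ))+2) := by
    rw [Matrix.mul_apply]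
    rw [Finset.sum_eq_single (⟨n-1-(j:ℕ), by omega⟩ : Fin n)]
    · rw [h1, hS]
      rw [if_pos (by simp; omega)]
    · intro b _ hb
      rw [hS, if_neg, mul_zero]
      intro h
      exact hb (Fin.ext (show (b:ℕ) = n-1-(j:ℕ) by omega))
    · simp
  rw [key, hStep]
  simp only [Matrix.smul_apply, Matrix.of_apply, smul_eq_mul]
  have hprod : ((n-1-(i:ℕ)) + 1 - k - 1) = (n - k - ((i:ℕ)+1)) := by omega
  rw [hprod]
  by_cases hd : (j:ℕ) = (i:ℕ)
  · -- diagonal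
    rw [if_pos hd]
    have hdd : (n-1-(j:ℕ)) = (n-1-(i:ℕ)) := by omega
    by_cases hA : (n-1-(i:ℕ)) + 1 ≤ k - 1
    · rw [if_pos hA, if_pos hdd]
      have h0 : n - k - ((i:ℕ)+1) = 0 := by omega
      rw [h0]
      simp only [Finset.Icc_eq_empty (by omega : ¬ (1:ℕ) ≤ 0), Finset.prod_empty, inv_one,
        mul_one]
      rw [← pow_add]
      exact negpow13 _ _ (by omega)
    · rw [if_neg hA, if_pos hdd]
      rw [negpow13 ((i:ℕ)+2) ((i:ℕ)+2) rfl]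
      rw [mul_comm ((-1:ℂ)^((i:ℕ)+2)) _, mul_assoc, ← pow_add,
        negpow13 ((i:ℕ)+2 + ((n-1-(j:ℕ))+2)) (n+1) (by omega), mul_comm]
  · rw [if_neg hd]
    have hdd : ¬ (n-1-(j:ℕ)) = (n-1-(i:ℕ)) := by omega
    by_cases hE : (j:ℕ) = (i:ℕ)+1 ∧ (i:ℕ)+1 ≤ n - k
    · rw [if_pos hE]
      have hA : ¬ ((n-1-(i:ℕ)) + 1 ≤ k - 1) := by omega
      rw [if_neg hA, if_neg hdd, if_pos (by constructor <;> omega)]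
      rw [show (-1:ℂ)^((i:ℕ)+2) * -(∏ m ∈ Finset.Icc 1 (n - k - ((i:ℕ)+1)), x m)⁻¹
            * (-1:ℂ)^((n-1-(j:ℕ))+2)
          = -((-1:ℂ)^((i:ℕ)+2 + ((n-1-(j:ℕ))+2)))
            * (∏ m ∈ Finset.Icc 1 (n - k - ((i:ℕ)+1)), x m)⁻¹ by rw [pow_add]; ring]
      rw [negpow13 ((i:ℕ)+2 + ((n-1-(j:ℕ))+2)) n (by omega)]
      rw [show (-(-1:ℂ)^n) = (-1)^(n+1) by rw [pow_succ]; ring]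
    · rw [if_neg hE]
      by_cases hA : (n-1-(i:ℕ)) + 1 ≤ k - 1
      · rw [if_pos hA, if_neg hdd]
        ring
      · rw [if_neg hA, if_neg hdd, if_neg (by push_neg; intro h; omega)]
        ring
end
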